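/- arXiv:1608.06784 — 3 statements merged into one kernel-verified Lean document; each statement's English description precedes it below -/
import Mathlib

section
/- Let A ∈ SU(2) with trace x and let g be a 3×3 signed permutation matrix. Then the coefficients of the characteristic polynomial det(tI − A⊗g) = ∑_{i=0}^{6} c_i tⁱ satisfy: c₀ = c₆ = 1; c₁ = c₅ = −tr(g)·x; c₂ = c₄ = tr(g²) + (x²/2)(tr(g)² − tr(g²)); c₃ = −(1/3)(tr(g)³ − tr(g³) − 6 det(g))·x − det(g)·x³. -/
/-!
Split the trace `x` of `A` as `x = l + m` with `l * m = 1` (the eigenvalues of `A`). After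
reindexing, `A ⊗ g` is the `2 × 2` block matrix `(Aᵢⱼ • g)`; its blocks commute, so
`det (t - A ⊗ g) = det ((t - l • g) (t - m • g)) = χ_{l•g}(t) χ_{m•g}(t)`. Since `gᵀ g = 1`,
`adj g = det g • gᵀ`, so each cubic factor is determined by `tr g` and `det g`; multiplying them
out with `l m = 1` and `(det g)² = 1`, and expressing `tr g²`, `tr g³` through `tr g`, `tr (adj g)`
and `det g`, gives the coefficients.
-/

open Matrix Kronecker

/-- `g` is a complex `3 × 3` signed permutation matrix: exactly one nonzero entry, equal to
`±1`, in each row and column. -/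
def IsSignedPermC (g : Matrix (Fin 3) (Fin 3) ℂ) : Prop :=
  ∃ σ : Equiv.Perm (Fin 3), ∃ ε : Fin 3 → ℤˣ,
    ∀ i j, g i j = if i = σ j then ((ε j : ℤ) : ℂ) else 0

section

open Polynomial

variable {R : Type*} [CommRing R]

theorem charpoly_fin_three (M : Matrix (Fin 3) (Fin 3) R) :
    M.charpoly = X ^ 3 - C M.trace * X ^ 2 + C (adjugate M).trace * X - C M.det := by
  rw [charpoly, det_fin_three, adjugate_fin_three, trace_fin_three_of, trace_fin_three,
    det_fin_three]
  simp only [charmatrix_apply, diagonal_apply, map_add, map_sub, map_mul]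
  norm_num [Fin.ext_iff]
  ring

theorem trace_mul_self_fin_three (M : Matrix (Fin 3) (Fin 3) R) :
    (M * M).trace = M.trace ^ 2 - 2 * (adjugate M).trace := by
  rw [adjugate_fin_three, trace_fin_three_of]
  simp only [trace_fin_three, mul_apply, Fin.sum_univ_three]
  ring

theorem trace_mul_self_mul_self_fin_three (M : Matrix (Fin 3) (Fin 3) R) :
    (M * M * M).trace = M.trace ^ 3 - 3 * M.trace * (adjugate M).trace + 3 * M.det := by
  rw [adjugate_fin_three, trace_fin_three_of, det_fin_three]
  simp only [trace_fin_three, mul_apply, Fin.sum_univ_three]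
  ring

theorem cubic_mul_cubic_of_mul_eq_one {l m t d : R} (hlm : l * m = 1) (hd : d ^ 2 = 1) :
    (X ^ 3 - C (l * t) * X ^ 2 + C (l ^ 2 * (d * t)) * X - C (l ^ 3 * d)) *
      (X ^ 3 - C (m * t) * X ^ 2 + C (m ^ 2 * (d * t)) * X - C (m ^ 3 * d))
    = X ^ 6 - C ((l + m) * t) * X ^ 5 + C (t ^ 2 + ((l + m) ^ 2 - 2) * d * t) * X ^ 4
      - C (d * (l + m) ^ 3 - 3 * d * (l + m) + (l + m) * d * t ^ 2) * X ^ 3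
      + C (t ^ 2 + ((l + m) ^ 2 - 2) * d * t) * X ^ 2 - C ((l + m) * t) * X + 1 := by
  have hLM : C l * C m = (1 : R[X]) := by rw [← C_mul, hlm, C_1]
  have hD : C d ^ 2 = (1 : R[X]) := by rw [← C_pow, hd, C_1]
  simp only [map_mul, map_pow, map_add, map_sub, map_ofNat]
  -- coefficientwise, the difference of the two sides lies in the ideal `(l m - 1, d² - 1)`
  linear_combination
    (X ^ 4 * (C t ^ 2 - 2 * C d * C t) - X ^ 3 * (C d * (C l + C m) * (C t ^ 2 - 3))
      + X ^ 2 * (C t * C d * (C l ^ 2 + C m ^ 2 - 2) + C t ^ 2 * C d ^ 2 * (C l * C m + 1))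
      - X * (C t * (C l + C m) * C d ^ 2 * (C l * C m + 1))
      + C d ^ 2 * (C l ^ 2 * C m ^ 2 + C l * C m + 1)) * hLM
    + (X ^ 2 * C t ^ 2 - X * C t * (C l + C m) + 1) * hD

variable {n : Type*} [Fintype n] [DecidableEq n]

theorem det_fromBlocks_of_commute (A B C D : Matrix n n R) (hCD : Commute C D)
    (hD : IsRegular D.det) :
    (fromBlocks A B C D).det = (A * D - B * C).det := by
  have hmul : fromBlocks A B C D * fromBlocks D 0 (-C) 1 = fromBlocks (A * D - B * C) B 0 D := by
    simp only [fromBlocks_multiply, Matrix.mul_zero, Matrix.mul_one, zero_add, Matrix.mul_neg,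
      hCD.eq, add_neg_cancel, sub_eq_add_neg]
  have h := congrArg det hmul
  rw [det_mul, det_fromBlocks_zero₁₂, det_fromBlocks_zero₂₁, det_one, mul_one] at h
  exact hD.2 h

theorem charpoly_kronecker_fin_two (A : Matrix (Fin 2) (Fin 2) R) (B : Matrix n n R) {l m : R}
    (hadd : l + m = A.trace) (hmul : l * m = A.det) :
    (A ⊗ₖ B).charpoly = (l • B).charpoly * (m • B).charpoly := by
  let e : Fin 2 × n ≃ n ⊕ n :=
    (Equiv.prodCongr finTwoEquiv (Equiv.refl n)).trans (Equiv.boolProdEquivSum n)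
  have hblocks : reindex e e (A ⊗ₖ B)
      = fromBlocks (A 0 0 • B) (A 0 1 • B) (A 1 0 • B) (A 1 1 • B) := by
    ext (i | i) (j | j) <;> rfl
  set G : Matrix n n R[X] := B.map C
  have hmap (c : R) : (c • B).map C = C c • G := by ext; simp [G]
  have hcharmatrix (c : R) : charmatrix (c • B) = (X : R[X]) • 1 - C c • G := by
    change scalar n X - (c • B).map C = _
    rw [hmap, smul_one_eq_diagonal, scalar_apply]
  have hS : IsRegular (charmatrix (A 1 1 • B)).det := (charpoly_monic _).isRegular
  rw [← charpoly_reindex e, hblocks, charpoly, charpoly, charpoly, charmatrix_fromBlocks,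
    det_fromBlocks_of_commute _ _ _ _ ?_ hS, ← det_mul]
  all_goals simp only [hcharmatrix, hmap]
  · congr 1
    rw [trace_fin_two] at hadd
    rw [det_fin_two] at hmul
    have hadd' : (C (A 0 0) + C (A 1 1) : R[X]) = C l + C m := by
      simp only [← C_add, hadd]
    have hmul' : C (A 0 0) * C (A 1 1) - C (A 0 1) * C (A 1 0) = (C l * C m : R[X]) := by
      simp only [← C_mul, ← C_sub, hmul]
    simp only [Matrix.mul_sub, Matrix.sub_mul, smul_mul_assoc, Matrix.mul_smul, Matrix.one_mul,
      Matrix.mul_one, Matrix.neg_mul, Matrix.mul_neg]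
    match_scalars
    · ring
    · linear_combination (-(X : R[X])) * hadd'
    · linear_combination hmul'
  · exact (((Commute.one_right G).smul_right _).sub_right
      ((Commute.refl G).smul_right _)).smul_left _ |>.neg_left

theorem det_sq_of_transpose_mul_self {M : Matrix n n R} (h : Mᵀ * M = 1) : M.det ^ 2 = 1 := by
  simpa [sq, det_transpose] using congrArg det h

theorem adjugate_eq_det_smul_transpose {M : Matrix n n R} (h : Mᵀ * M = 1) :
    adjugate M = M.det • Mᵀ := by
  calc adjugate M = Mᵀ * (M * adjugate M) := by rw [← Matrix.mul_assoc, h, Matrix.one_mul]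
    _ = M.det • Mᵀ := by rw [mul_adjugate, Matrix.mul_smul, Matrix.mul_one]

theorem trace_adjugate_of_transpose_mul_self {M : Matrix n n R} (h : Mᵀ * M = 1) :
    (adjugate M).trace = M.det * M.trace := by
  rw [adjugate_eq_det_smul_transpose h, trace_smul, trace_transpose, smul_eq_mul]

theorem charpoly_smul_of_transpose_mul_self {M : Matrix (Fin 3) (Fin 3) R} (h : Mᵀ * M = 1)
    (c : R) :
    (c • M).charpoly = X ^ 3 - C (c * M.trace) * X ^ 2 + C (c ^ 2 * (M.det * M.trace)) * X
      - C (c ^ 3 * M.det) := by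
  rw [charpoly_fin_three, adjugate_smul, trace_smul, trace_smul,
    trace_adjugate_of_transpose_mul_self h, det_smul]
  simp only [Fintype.card_fin, smul_eq_mul]

theorem exists_add_eq_and_mul_eq {K : Type*} [Field K] [IsAlgClosed K] (s p : K) :
    ∃ l m : K, l + m = s ∧ l * m = p := by
  have hdeg : (X ^ 2 - C s * X + C p : K[X]).degree = 2 := by compute_degree!
  obtain ⟨l, hl⟩ := IsAlgClosed.exists_root (X ^ 2 - C s * X + C p) (hdeg ▸ two_ne_zero)
  refine ⟨l, s - l, add_sub_cancel l s, ?_⟩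
  simp only [IsRoot, eval_add, eval_sub, eval_mul, eval_pow, eval_X, eval_C] at hl
  linear_combination -hl

theorem charpoly_kronecker_of_det_eq_one {K : Type*} [Field K] [IsAlgClosed K]
    {A : Matrix (Fin 2) (Fin 2) K} (hA : A.det = 1) {g : Matrix (Fin 3) (Fin 3) K}
    (hg : gᵀ * g = 1) :
    let x := A.trace
    let t := g.trace
    let d := g.det
    (A ⊗ₖ g).charpoly = X ^ 6 - C (x * t) * X ^ 5 + C (t ^ 2 + (x ^ 2 - 2) * d * t) * X ^ 4
      - C (d * x ^ 3 - 3 * d * x + x * d * t ^ 2) * X ^ 3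
      + C (t ^ 2 + (x ^ 2 - 2) * d * t) * X ^ 2 - C (x * t) * X + 1 := by
  obtain ⟨l, m, hadd, hmul⟩ := exists_add_eq_and_mul_eq A.trace 1
  rw [charpoly_kronecker_fin_two A g hadd (hmul.trans hA.symm),
    charpoly_smul_of_transpose_mul_self hg, charpoly_smul_of_transpose_mul_self hg,
    cubic_mul_cubic_of_mul_eq_one hmul (det_sq_of_transpose_mul_self hg), hadd]

end

theorem IsSignedPermC.transpose_mul_self {g : Matrix (Fin 3) (Fin 3) ℂ} (hg : IsSignedPermC g) :
    gᵀ * g = 1 := by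
  obtain ⟨σ, ε, h⟩ := hg
  ext j k
  by_cases hjk : j = k
  · subst hjk
    simp [mul_apply, h, one_apply, ← Units.val_mul, ← Int.cast_mul]
  · have hσ : σ j ≠ σ k := σ.injective.ne hjk
    simp only [mul_apply, transpose_apply, h, ite_mul, zero_mul, mul_ite, mul_zero, ← ite_and,
      one_apply_ne hjk]
    exact Finset.sum_eq_zero fun i _ => if_neg fun hi => hσ (hi.2.symm.trans hi.1)

theorem stmt13_general (A : Matrix (Fin 2) (Fin 2) ℂ)
    (hdet : A.det = 1)
    (x : ℂ) (hx : A.trace = x)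
    (g : Matrix (Fin 3) (Fin 3) ℂ) (hg : IsSignedPermC g) :
    ((A ⊗ₖ g).charpoly.coeff 0 = 1) ∧
    ((A ⊗ₖ g).charpoly.coeff 6 = 1) ∧
    ((A ⊗ₖ g).charpoly.coeff 1 = -(g.trace) * x) ∧
    ((A ⊗ₖ g).charpoly.coeff 5 = -(g.trace) * x) ∧
    ((A ⊗ₖ g).charpoly.coeff 2 =
      (g * g).trace + x ^ 2 / 2 * (g.trace ^ 2 - (g * g).trace)) ∧
    ((A ⊗ₖ g).charpoly.coeff 4 =
      (g * g).trace + x ^ 2 / 2 * (g.trace ^ 2 - (g * g).trace)) ∧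
    ((A ⊗ₖ g).charpoly.coeff 3 =
      -(1 / 3) * (g.trace ^ 3 - (g * g * g).trace - 6 * g.det) * x - g.det * x ^ 3) := by
  have hgg := hg.transpose_mul_self
  rw [charpoly_kronecker_of_det_eq_one hdet hgg, hx, trace_mul_self_fin_three,
    trace_mul_self_mul_self_fin_three, trace_adjugate_of_transpose_mul_self hgg]
  simp only [Polynomial.coeff_add, Polynomial.coeff_sub, Polynomial.coeff_C_mul,
    Polynomial.coeff_X_pow, Polynomial.coeff_X, Polynomial.coeff_one]
  norm_num
  refine ⟨?_, ?_, ?_⟩ <;> ring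

/-- For `A ∈ SU(2)` with trace `x` and `g` a `3 × 3` signed permutation matrix, the
coefficients `cᵢ` of the characteristic polynomial `det(tI − A ⊗ g) = ∑ cᵢ tⁱ` are:
`c₀ = c₆ = 1`, `c₁ = c₅ = −tr(g)·x`, `c₂ = c₄ = tr(g²) + (x²/2)(tr(g)² − tr(g²))`, and
`c₃ = −(1/3)(tr(g)³ − tr(g³) − 6 det g)·x − det(g)·x³`. -/
theorem stmt13 (A : Matrix (Fin 2) (Fin 2) ℂ)
    (hA : A ∈ Matrix.unitaryGroup (Fin 2) ℂ) (hdet : A.det = 1)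
    (x : ℂ) (hx : A.trace = x)
    (g : Matrix (Fin 3) (Fin 3) ℂ) (hg : IsSignedPermC g) :
    ((A ⊗ₖ g).charpoly.coeff 0 = 1) ∧
    ((A ⊗ₖ g).charpoly.coeff 6 = 1) ∧
    ((A ⊗ₖ g).charpoly.coeff 1 = -(g.trace) * x) ∧
    ((A ⊗ₖ g).charpoly.coeff 5 = -(g.trace) * x) ∧
    ((A ⊗ₖ g).charpoly.coeff 2 =
      (g * g).trace + x ^ 2 / 2 * (g.trace ^ 2 - (g * g).trace)) ∧
    ((A ⊗ₖ g).charpoly.coeff 4 =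
      (g * g).trace + x ^ 2 / 2 * (g.trace ^ 2 - (g * g).trace)) ∧
    ((A ⊗ₖ g).charpoly.coeff 3 =
      -(1 / 3) * (g.trace ^ 3 - (g * g * g).trace - 6 * g.det) * x - g.det * x ^ 3) :=
  stmt13_general A hdet x hx g hg
end

section
/- Conjugation by the above matrix g ∈ USp(6) sends the block matrix P = [[0,I,0],[I,0,0],[0,0,I]] (2×2 blocks) to the block matrix D = [[−I,0,0],[0,I,0],[0,0,I]]. Consequently the subgroups G₂ = ⟨SU(2)₃, P⟩ and G₃ = ⟨SU(2)₃, D⟩ of USp(6) are conjugate in USp(6). -/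
open Matrix

/-- The explicit matrix `g`, viewed as a complex `6 × 6` matrix. -/
noncomputable def gC : Matrix (Fin 6) (Fin 6) ℂ :=
  !![0, ((Real.sqrt 2 : ℝ) : ℂ)⁻¹, 0, -((Real.sqrt 2 : ℝ) : ℂ)⁻¹, 0, 0;
     -((Real.sqrt 2 : ℝ) : ℂ)⁻¹, 0, ((Real.sqrt 2 : ℝ) : ℂ)⁻¹, 0, 0, 0;
     0, -((Real.sqrt 2 : ℝ) : ℂ)⁻¹, 0, -((Real.sqrt 2 : ℝ) : ℂ)⁻¹, 0, 0;
     ((Real.sqrt 2 : ℝ) : ℂ)⁻¹, 0, ((Real.sqrt 2 : ℝ) : ℂ)⁻¹, 0, 0, 0;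
     0, 0, 0, 0, 0, 1;
     0, 0, 0, 0, -1, 0]

/-- The symplectic form `J`, block-diagonal with three blocks `[[0,1],[−1,0]]`. -/
def JC : Matrix (Fin 6) (Fin 6) ℂ :=
  !![0, 1, 0, 0, 0, 0;
     -1, 0, 0, 0, 0, 0;
     0, 0, 0, 1, 0, 0;
     0, 0, -1, 0, 0, 0;
     0, 0, 0, 0, 0, 1;
     0, 0, 0, 0, -1, 0]

/-- The block matrix `P = [[0,I,0],[I,0,0],[0,0,I]]` (in `2 × 2` blocks). -/
def PMat : Matrix (Fin 6) (Fin 6) ℂ :=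
  !![0, 0, 1, 0, 0, 0;
     0, 0, 0, 1, 0, 0;
     1, 0, 0, 0, 0, 0;
     0, 1, 0, 0, 0, 0;
     0, 0, 0, 0, 1, 0;
     0, 0, 0, 0, 0, 1]

/-- The block matrix `D = [[−I,0,0],[0,I,0],[0,0,I]]` (in `2 × 2` blocks). -/
def DMat : Matrix (Fin 6) (Fin 6) ℂ :=
  !![-1, 0, 0, 0, 0, 0;
     0, -1, 0, 0, 0, 0;
     0, 0, 1, 0, 0, 0;
     0, 0, 0, 1, 0, 0;
     0, 0, 0, 0, 1, 0;
     0, 0, 0, 0, 0, 1]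

/-- `diag₃(M)` for `M = [[a, b], [c, d]]`. -/
def diag3C (a b c d : ℂ) : Matrix (Fin 6) (Fin 6) ℂ :=
  !![a, b, 0, 0, 0, 0;
     c, d, 0, 0, 0, 0;
     0, 0, a, b, 0, 0;
     0, 0, c, d, 0, 0;
     0, 0, 0, 0, a, b;
     0, 0, 0, 0, c, d]

/-- The diagonally embedded `SU(2)₃ ⊂ USp(6)`. -/
def SU23set : Set (Matrix (Fin 6) (Fin 6) ℂ) :=
  {N | ∃ a b c d : ℂ,
    (!![a, b; c, d])ᴴ * !![a, b; c, d] = 1 ∧ a * d - b * c = 1 ∧ N = diag3C a b c d}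

/-- The group `G₂ = ⟨SU(2)₃, P⟩`. -/
def G2 : Submonoid (Matrix (Fin 6) (Fin 6) ℂ) := Submonoid.closure (SU23set ∪ {PMat})

/-- The group `G₃ = ⟨SU(2)₃, D⟩`. -/
def G3 : Submonoid (Matrix (Fin 6) (Fin 6) ℂ) := Submonoid.closure (SU23set ∪ {DMat})

/-!
Direct computation shows that `g` is unitary and symplectic and conjugates `P` to `D`. It also
conjugates `diag₃(M)` to `diag₃(J M J⁻¹)` with `J = [[0, 1], [-1, 0]] ∈ SU(2)`, so it preserves
`SU(2)₃`. Conjugation by a unit is a monoid endomorphism, so it carries the monoid generated by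
`SU(2)₃ ∪ {P}` onto the one generated by `SU(2)₃ ∪ {D}`.
-/

theorem Submonoid.image_closure_conj {M : Type*} [Monoid M] (u : Mˣ) (s : Set M) :
    (fun x => (u : M) * x * (u⁻¹ : Mˣ)) '' (closure s : Set M) =
      (closure ((fun x => (u : M) * x * (u⁻¹ : Mˣ)) '' s) : Set M) := by
  have hconj : ⇑(MulDistribMulAction.toMonoidHom M (ConjAct.toConjAct u)) =
      fun x => (u : M) * x * (u⁻¹ : Mˣ) :=
    funext fun x => ConjAct.units_smul_def _ x
  rw [← hconj, ← Submonoid.coe_map, MonoidHom.map_mclosure]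

theorem Matrix.swap_mem_specialUnitaryGroup {R : Type*} [CommRing R] [StarRing R] {a b c d : R}
    (h : !![a, b; c, d] ∈ specialUnitaryGroup (Fin 2) R) :
    !![d, -c; -b, a] ∈ specialUnitaryGroup (Fin 2) R := by
  have hJ : !![0, 1; -1, 0] ∈ specialUnitaryGroup (Fin 2) R := by
    refine mem_specialUnitaryGroup_iff.mpr ⟨mem_unitaryGroup_iff'.mpr ?_, by simp⟩
    ext i j
    fin_cases i <;> fin_cases j <;> simp [mul_apply]
  have hconj : !![d, -c; -b, a] = !![0, 1; -1, 0] * !![a, b; c, d] * star !![0, 1; -1, 0] := by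
    ext i j
    fin_cases i <;> fin_cases j <;> simp [mul_apply]
  rw [hconj]
  exact mul_mem (mul_mem hJ h) (star ⟨_, hJ⟩ : specialUnitaryGroup (Fin 2) R).2

lemma mem_SU23set_iff {N : Matrix (Fin 6) (Fin 6) ℂ} :
    N ∈ SU23set ↔
      ∃ a b c d : ℂ, !![a, b; c, d] ∈ specialUnitaryGroup (Fin 2) ℂ ∧ N = diag3C a b c d := by
  simp [SU23set, mem_specialUnitaryGroup_iff, mem_unitaryGroup_iff', star_eq_conjTranspose,
    det_fin_two_of, and_assoc]

lemma ofReal_sqrt_two_sq : ((Real.sqrt 2 : ℝ) : ℂ) ^ 2 = 2 := by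
  rw [← Complex.ofReal_pow, Real.sq_sqrt zero_le_two, Complex.ofReal_ofNat]

set_option maxHeartbeats 1000000 in
lemma gC_conjTranspose_mul_gC : gCᴴ * gC = 1 := by
  ext i j
  fin_cases i <;> fin_cases j <;> simp [gC, mul_apply, Fin.sum_univ_succ, one_apply] <;>
    ring_nf <;> simp [ofReal_sqrt_two_sq]

set_option maxHeartbeats 1000000 in
lemma gC_transpose_mul_JC_mul_gC : gCᵀ * JC * gC = JC := by
  ext i j
  fin_cases i <;> fin_cases j <;> simp [gC, JC, mul_apply, Fin.sum_univ_succ] <;>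
    ring_nf <;> simp [ofReal_sqrt_two_sq]

set_option maxHeartbeats 1000000 in
lemma gC_mul_PMat_mul_conjTranspose : gC * PMat * gCᴴ = DMat := by
  ext i j
  fin_cases i <;> fin_cases j <;> simp [gC, PMat, DMat, mul_apply, Fin.sum_univ_succ] <;>
    ring_nf <;> simp [ofReal_sqrt_two_sq]

set_option maxHeartbeats 1000000 in
lemma gC_mul_diag3C_mul_conjTranspose (a b c d : ℂ) :
    gC * diag3C a b c d * gCᴴ = diag3C d (-c) (-b) a := by
  ext i j
  fin_cases i <;> fin_cases j <;> simp [gC, diag3C, mul_apply, Fin.sum_univ_succ] <;>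
    ring_nf <;> simp [ofReal_sqrt_two_sq] <;> ring

lemma image_conj_gC_SU23set : (fun N => gC * N * gCᴴ) '' SU23set = SU23set := by
  ext N
  simp only [Set.mem_image, mem_SU23set_iff]
  constructor
  · rintro ⟨_, ⟨a, b, c, d, hM, rfl⟩, rfl⟩
    exact ⟨d, -c, -b, a, swap_mem_specialUnitaryGroup hM,
      gC_mul_diag3C_mul_conjTranspose a b c d⟩
  · rintro ⟨a, b, c, d, hM, rfl⟩
    refine ⟨diag3C d (-c) (-b) a, ⟨d, -c, -b, a, swap_mem_specialUnitaryGroup hM, rfl⟩, ?_⟩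
    rw [gC_mul_diag3C_mul_conjTranspose, neg_neg, neg_neg]

/-- `g` lies in `USp(6)` and conjugation by `g` sends `P` to `D`; consequently the
subgroups `G₂ = ⟨SU(2)₃, P⟩` and `G₃ = ⟨SU(2)₃, D⟩` are conjugate in `USp(6)`. -/
theorem stmt17 :
    gCᴴ * gC = 1 ∧ gCᵀ * JC * gC = JC ∧
    gC * PMat * gC⁻¹ = DMat ∧
    (fun A => gC * A * gC⁻¹) '' (G2 : Set (Matrix (Fin 6) (Fin 6) ℂ)) =
      (G3 : Set (Matrix (Fin 6) (Fin 6) ℂ)) := by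
  have hinv : gC⁻¹ = gCᴴ := inv_eq_left_inv gC_conjTranspose_mul_gC
  refine ⟨gC_conjTranspose_mul_gC, gC_transpose_mul_JC_mul_gC,
    hinv ▸ gC_mul_PMat_mul_conjTranspose, ?_⟩
  let u : (Matrix (Fin 6) (Fin 6) ℂ)ˣ :=
    ⟨gC, gCᴴ, mul_eq_one_comm.mp gC_conjTranspose_mul_gC, gC_conjTranspose_mul_gC⟩
  rw [hinv]
  calc (fun A => gC * A * gCᴴ) '' (G2 : Set (Matrix (Fin 6) (Fin 6) ℂ))
      = (Submonoid.closure ((fun A => gC * A * gCᴴ) '' (SU23set ∪ {PMat})) : Set _) :=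
        Submonoid.image_closure_conj u _
    _ = G3 := by
        rw [Set.image_union, Set.image_singleton, image_conj_gC_SU23set,
          gC_mul_PMat_mul_conjTranspose]
        rfl
end

section
/- Let G be a compact group, η the character of a 2-dimensional unitary representation of G with ⟨η,η⟩ = 1, and ψ : G → ℂ^× a continuous homomorphism (1-dimensional character) such that ∫_G ψⁿ η^k dg = 0 and ∫_G ψ̄ⁿ η^k dg = 0 for all n > 0, k ≥ 0. Set χ = 2ψ + 2ψ̄ + η. Then ∫_G χ⁴ dg = 144 + ∫_G η⁴ dg, and since |η(g)| ≤ 2 for all g, ∫_G χ⁴ dg ≤ 160. In particular ∫_G χ⁴ dg ≠ 162. -/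
/-!
Since `ψ̄ = ψ⁻¹`, expanding `χ⁴` leaves `96 + 48 η² + η⁴` plus monomials `ψⁿ ηᵏ` and `ψ̄ⁿ ηᵏ`
with `n > 0`, whose integrals vanish. Then `∫ η² = 1` gives `∫ χ⁴ = 144 + ∫ η⁴`, and `|η| ≤ 2`
bounds `∫ η⁴` by `16`.
-/

open MeasureTheory

/-- The monomials `z ^ n * x ^ k` with `n > 0` in `(2 z + 2 z⁻¹ + x) ^ 4`. -/
def quarticOscillation (z x : ℂ) : ℂ :=
  96 * (z * x) + 8 * (z * x ^ 3) + 64 * z ^ 2 + 24 * (z ^ 2 * x ^ 2) + 32 * (z ^ 3 * x) + 16 * z ^ 4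

@[fun_prop]
theorem Continuous.quarticOscillation {X : Type*} [TopologicalSpace X] {f g : X → ℂ}
    (hf : Continuous f) (hg : Continuous g) :
    Continuous fun x => quarticOscillation (f x) (g x) := by
  unfold _root_.quarticOscillation
  fun_prop

theorem quartic_expansion {z w : ℂ} (x : ℂ) (hzw : z * w = 1) :
    (2 * z + 2 * w + x) ^ 4 =
      96 + 48 * x ^ 2 + x ^ 4 + quarticOscillation z x + quarticOscillation w x := by
  unfold quarticOscillation
  linear_combination (48 * x ^ 2 + 96 * z * x + 96 * w * x + 64 * z ^ 2 + 64 * w ^ 2 + 96 * z * w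
    + 96) * hzw

theorem integral_ofReal_pow {X : Type*} [MeasurableSpace X] {μ : Measure X} (f : X → ℝ) (n : ℕ) :
    ∫ x, (f x : ℂ) ^ n ∂μ = ((∫ x, f x ^ n ∂μ : ℝ) : ℂ) := by
  simp_rw [← Complex.ofReal_pow]
  exact integral_ofReal

section CompactSpace

variable {X : Type*} [TopologicalSpace X] [CompactSpace X] [MeasurableSpace X]
  [OpensMeasurableSpace X] {μ : Measure X} [IsFiniteMeasure μ]

theorem Continuous.integrable_of_compactSpace {E : Type*} [NormedAddCommGroup E] {f : X → E}
    (hf : Continuous f) : Integrable f μ :=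
  hf.integrable_of_hasCompactSupport (.of_compactSpace f)

theorem integral_add_of_continuous {E : Type*} [NormedAddCommGroup E] [NormedSpace ℝ E]
    {f g : X → E} (hf : Continuous f) (hg : Continuous g) :
    ∫ x, f x + g x ∂μ = ∫ x, f x ∂μ + ∫ x, g x ∂μ :=
  integral_add hf.integrable_of_compactSpace hg.integrable_of_compactSpace

theorem integral_pow_le_of_abs_le [IsProbabilityMeasure μ] {f : X → ℝ} (hf : Continuous f)
    {C : ℝ} (hC : ∀ x, |f x| ≤ C) (n : ℕ) : ∫ x, f x ^ n ∂μ ≤ C ^ n := by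
  have hpow : ∀ x, f x ^ n ≤ C ^ n := fun x =>
    calc f x ^ n ≤ |f x| ^ n := by rw [← abs_pow]; exact le_abs_self _
      _ ≤ C ^ n := pow_le_pow_left₀ (abs_nonneg _) (hC x) n
  calc ∫ x, f x ^ n ∂μ ≤ ∫ _, C ^ n ∂μ :=
        integral_mono (hf.pow n).integrable_of_compactSpace (integrable_const _) hpow
    _ = C ^ n := by simp

theorem integral_quarticOscillation_eq_zero {f h : X → ℂ} (hf : Continuous f)
    (hh : Continuous h) (hvan : ∀ n : ℕ, 0 < n → ∀ k : ℕ, ∫ x, f x ^ n * h x ^ k ∂μ = 0) :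
    ∫ x, quarticOscillation (f x) (h x) ∂μ = 0 := by
  have h11 : ∫ x, f x * h x ∂μ = 0 := by simpa using hvan 1 one_pos 1
  have h13 : ∫ x, f x * h x ^ 3 ∂μ = 0 := by simpa using hvan 1 one_pos 3
  have h20 : ∫ x, f x ^ 2 ∂μ = 0 := by simpa using hvan 2 two_pos 0
  have h31 : ∫ x, f x ^ 3 * h x ∂μ = 0 := by simpa using hvan 3 three_pos 1
  have h40 : ∫ x, f x ^ 4 ∂μ = 0 := by simpa using hvan 4 four_pos 0
  simp (disch := fun_prop) only [quarticOscillation, integral_add_of_continuous]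
  simp [integral_const_mul, h11, h13, h20, hvan 2 two_pos 2, h31, h40]

end CompactSpace

theorem stmt18_general {G : Type*} [TopologicalSpace G]
    [CompactSpace G] [MeasurableSpace G] [BorelSpace G]
    (μ : Measure G) [IsProbabilityMeasure μ]
    (ψ : G → ℂ) (η : G → ℝ)
    (hψc : Continuous ψ) (hηc : Continuous η)
    (hψu : ∀ g : G, ψ g * (starRingEnd ℂ) (ψ g) = 1)
    (hη2 : ∫ g, (η g) ^ 2 ∂μ = 1)
    (hηb : ∀ g : G, |η g| ≤ 2)
    (hvanψ : ∀ n : ℕ, 0 < n → ∀ k : ℕ,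
      ∫ g, (ψ g) ^ n * ((η g : ℂ)) ^ k ∂μ = 0)
    (hvanψbar : ∀ n : ℕ, 0 < n → ∀ k : ℕ,
      ∫ g, ((starRingEnd ℂ) (ψ g)) ^ n * ((η g : ℂ)) ^ k ∂μ = 0)
    (χ : G → ℂ)
    (hχ : ∀ g : G, χ g = 2 * ψ g + 2 * (starRingEnd ℂ) (ψ g) + (η g : ℂ)) :
    (∫ g, (χ g) ^ 4 ∂μ = 144 + ((∫ g, (η g) ^ 4 ∂μ : ℝ) : ℂ)) ∧
    (∫ g, (χ g) ^ 4 ∂μ).re ≤ 160 ∧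
    (∫ g, (χ g) ^ 4 ∂μ) ≠ 162 := by
  have hpoint : ∀ g, χ g ^ 4 = (96 + 48 * (η g : ℂ) ^ 2 + (η g : ℂ) ^ 4)
      + quarticOscillation (ψ g) (η g) + quarticOscillation (starRingEnd ℂ (ψ g)) (η g) :=
    fun g => by rw [hχ g]; exact quartic_expansion _ (hψu g)
  have hmain : ∫ g, χ g ^ 4 ∂μ = 144 + ((∫ g, η g ^ 4 ∂μ : ℝ) : ℂ) := by
    simp_rw [hpoint]
    rw [integral_add_of_continuous (by fun_prop) (by fun_prop),
      integral_add_of_continuous (by fun_prop) (by fun_prop),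
      integral_quarticOscillation_eq_zero hψc (by fun_prop) hvanψ,
      integral_quarticOscillation_eq_zero (by fun_prop) (by fun_prop) hvanψbar,
      integral_add_of_continuous (by fun_prop) (by fun_prop),
      integral_add_of_continuous (by fun_prop) (by fun_prop),
      integral_const_mul, integral_ofReal_pow, integral_ofReal_pow, hη2]
    norm_num
  have hη4 : ∫ g, η g ^ 4 ∂μ ≤ 16 := by
    simpa [show (2 : ℝ) ^ 4 = 16 by norm_num] using integral_pow_le_of_abs_le (μ := μ) hηc hηb 4
  have hre : (∫ g, χ g ^ 4 ∂μ).re ≤ 160 := by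
    rw [hmain]
    norm_num
    linarith
  exact ⟨hmain, hre, fun h => by rw [h] at hre; norm_num at hre⟩

/-- Let `G` be a compact group with normalized Haar measure, `ψ` a continuous 1-dimensional
unitary character, `η` a real-valued continuous character of norm 1 (⟨η,η⟩ = 1) bounded by 2,
such that `∫ ψⁿ η^k = ∫ ψ̄ⁿ η^k = 0` for all `n > 0`, `k ≥ 0`. Then `χ = 2ψ + 2ψ̄ + η`
satisfies `∫ χ⁴ = 144 + ∫ η⁴ ≤ 160`; in particular `∫ χ⁴ ≠ 162`. -/
theorem stmt18 {G : Type*} [Group G] [TopologicalSpace G] [IsTopologicalGroup G]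
    [CompactSpace G] [MeasurableSpace G] [BorelSpace G]
    (μ : Measure G) [μ.IsHaarMeasure] [IsProbabilityMeasure μ]
    (ψ : G → ℂ) (η : G → ℝ)
    (hψc : Continuous ψ) (hηc : Continuous η)
    (hψhom : ∀ g h : G, ψ (g * h) = ψ g * ψ h)
    (hψu : ∀ g : G, ψ g * (starRingEnd ℂ) (ψ g) = 1)
    (hη2 : ∫ g, (η g) ^ 2 ∂μ = 1)
    (hηb : ∀ g : G, |η g| ≤ 2)
    (hvanψ : ∀ n : ℕ, 0 < n → ∀ k : ℕ,
      ∫ g, (ψ g) ^ n * ((η g : ℂ)) ^ k ∂μ = 0)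
    (hvanψbar : ∀ n : ℕ, 0 < n → ∀ k : ℕ,
      ∫ g, ((starRingEnd ℂ) (ψ g)) ^ n * ((η g : ℂ)) ^ k ∂μ = 0)
    (χ : G → ℂ)
    (hχ : ∀ g : G, χ g = 2 * ψ g + 2 * (starRingEnd ℂ) (ψ g) + (η g : ℂ)) :
    (∫ g, (χ g) ^ 4 ∂μ = 144 + ((∫ g, (η g) ^ 4 ∂μ : ℝ) : ℂ)) ∧
    (∫ g, (χ g) ^ 4 ∂μ).re ≤ 160 ∧
    (∫ g, (χ g) ^ 4 ∂μ) ≠ 162 :=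
  stmt18_general μ ψ η hψc hηc hψu hη2 hηb hvanψ hvanψbar χ hχ
end
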